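/- The function g(x) = (x+1)·ln(1 + 1/x) / √(2x+1) is strictly monotonically decreasing on (0, ∞). -/

import Mathlib

/-!
Differentiating, `g' x = (x ln(1 + 1/x) - (2x + 1)/x) / (2x + 1)^(3/2)`. Since `ln y ≤ y - 1`,
`x ln(1 + 1/x) ≤ 1`, while `(2x + 1)/x = 2 + 1/x > 1`, so `g' < 0` on `(0, ∞)`.
-/

open Real Set

noncomputable def g (x : ℝ) : ℝ := (x + 1) * log (1 + 1 / x) / √(2 * x + 1)

lemma mul_log_one_add_one_div_le_one {x : ℝ} (hx : 0 < x) : x * log (1 + 1 / x) ≤ 1 := by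
  have hlog : log (1 + 1 / x) ≤ 1 / x := by
    linarith [log_le_sub_one_of_pos (by positivity : 0 < 1 + 1 / x)]
  calc x * log (1 + 1 / x) ≤ x * (1 / x) := mul_le_mul_of_nonneg_left hlog hx.le
    _ = 1 := mul_one_div_cancel hx.ne'

lemma hasDerivAt_g {x : ℝ} (hx : 0 < x) :
    HasDerivAt g ((x * log (1 + 1 / x) - (2 * x + 1) / x) / ((2 * x + 1) * √(2 * x + 1))) x := by
  have hs : 0 < 2 * x + 1 := by linarith
  have hlog : HasDerivAt (fun x : ℝ => log (1 + 1 / x)) (-(x ^ 2)⁻¹ / (1 + 1 / x)) x := by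
    simpa only [one_div] using ((hasDerivAt_inv hx.ne').const_add 1).log (by positivity)
  have hlin : HasDerivAt (fun x : ℝ => 2 * x + 1) 2 x := by
    simpa using ((hasDerivAt_id x).const_mul 2).add_const 1
  refine ((((hasDerivAt_id x).add_const 1).mul hlog).div
    ((hasDerivAt_sqrt hs.ne').comp x hlin) (sqrt_pos.mpr hs).ne').congr_deriv ?_
  simp only [id, Function.comp_apply, Pi.mul_apply]
  rw [sq_sqrt hs.le]
  field_simp
  linear_combination (x * log ((x + 1) / x) - 1) * sq_sqrt (by linarith : 0 ≤ x * 2 + 1)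

lemma deriv_g_neg {x : ℝ} (hx : 0 < x) : deriv g x < 0 := by
  have hs : 0 < 2 * x + 1 := by linarith
  have hquot : 1 < (2 * x + 1) / x := by rw [lt_div_iff₀ hx]; linarith
  rw [(hasDerivAt_g hx).deriv]
  exact div_neg_of_neg_of_pos (by linarith [mul_log_one_add_one_div_le_one hx])
    (mul_pos hs (sqrt_pos.mpr hs))

/-- The function g(x) = (x+1)·ln(1 + 1/x) / √(2x+1) is strictly monotonically
decreasing on (0, ∞). -/
theorem stmt_0 :
    StrictAntiOn (fun x : ℝ => (x + 1) * Real.log (1 + 1 / x) / Real.sqrt (2 * x + 1))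
      (Set.Ioi (0 : ℝ)) := by
  show StrictAntiOn g (Ioi 0)
  refine strictAntiOn_of_deriv_neg (convex_Ioi 0)
    (fun x hx => (hasDerivAt_g hx).continuousAt.continuousWithinAt) ?_
  rw [interior_Ioi]
  exact fun x hx => deriv_g_neg hx
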